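/- For the reflection I : Cat → Preord, the class of stably-vertical morphisms (functors bijective on objects and full) is strictly contained in the class of vertical morphisms (functors f bijective on objects such that nonemptiness of Hom_B(fa, fa') implies nonemptiness of Hom_A(a,a')): there exists a vertical functor that is not stably vertical. Hence the monotone-light factorization system (E'_I, M*_I) differs from the reflective factorization system (E_I, M_I). -/

import Mathlib

open CategoryTheory
universe u

/-- The objects of a small category, regarded as carrying the reflected preorder. -/
def PreOb (A : Cat.{u, u}) : Type u := A

instance instPreObPreorder (A : Cat.{u, u}) : Preorder (PreOb A) where
  le x y := Nonempty ((show ↑A from x) ⟶ (show ↑A from y))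
  le_refl x := ⟨𝟙 _⟩
  le_trans _ _ _ h h' := ⟨h.some ≫ h'.some⟩

/-- The reflection `I : Cat → Preord` on objects (regarded as landing in `Cat`). -/
def ICat (A : Cat.{u, u}) : Cat.{u, u} := Cat.of (PreOb A)

instance (A : Cat.{u, u}) : Preorder ↑(ICat A) := instPreObPreorder A

/-- In the reflected preorder, a morphism of `A` witnesses an inequality. -/
def toLe {A : Cat.{u, u}} {x y : ↑A} (g : x ⟶ y) :
    (show PreOb A from x) ≤ (show PreOb A from y) := ⟨g⟩

/-- The unit of the reflection `Cat → Preord`. -/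
def etaF (A : Cat.{u, u}) : A ⟶ ICat A where
  toFunctor :=
  { obj x := (show PreOb A from x)
    map {_x _y} g := homOfLE (toLe g)
    map_id _ := rfl
    map_comp _ _ := rfl }

/-- The reflection `I : Cat → Preord` on morphisms. -/
def IFun {A B : Cat.{u, u}} (f : A ⟶ B) : ICat A ⟶ ICat B where
  toFunctor :=
  { obj x := (show PreOb B from f.toFunctor.obj (show ↑A from x))
    map {_x _y} g := homOfLE (Nonempty.map (fun h => f.toFunctor.map h) (leOfHom g))
    map_id _ := rfl
    map_comp _ _ := rfl }

/-- `f` is stably vertical: every pullback of `f` is inverted by the reflection `I`. -/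
def StablyVertical {A B : Cat.{u, u}} (f : A ⟶ B) : Prop :=
  ∀ (C P : Cat.{u, u}) (g : C ⟶ B) (π₁ : P ⟶ C) (π₂ : P ⟶ A),
    IsPullback π₁ π₂ g f → IsIso (IFun π₁)

/-!
A functor `f` is inverted by `I` exactly when it is bijective on objects and reflects the
existence of morphisms, and pulling back along identities shows that stably vertical functors
are vertical. The walking arrow `0 ⟶ 1`, sent onto one of the two arrows of the walking parallel
pair `zero ⇉ one`, is vertical. Its pullback along the functor picking out the other arrow has
no morphism over `0 ⟶ 1`, since the image of such a morphism would be both parallel arrows;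
so `I` of the pullback projection does not reflect `0 ≤ 1`.
-/

theorem isIso_IFun_iff {A B : Cat.{u, u}} (f : A ⟶ B) :
    IsIso (IFun f) ↔ Function.Bijective f.toFunctor.obj ∧
      ∀ x y : A, Nonempty (f.toFunctor.obj x ⟶ f.toFunctor.obj y) → Nonempty (x ⟶ y) := by
  constructor
  · intro
    set G := (inv (IFun f)).toFunctor
    have hGF (x : A) : G.obj (f.toFunctor.obj x) = x :=
      Functor.congr_obj (congrArg Cat.Hom.toFunctor (IsIso.hom_inv_id (IFun f))) x
    have hFG (y : B) : f.toFunctor.obj (G.obj y) = y :=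
      Functor.congr_obj (congrArg Cat.Hom.toFunctor (IsIso.inv_hom_id (IFun f))) y
    refine ⟨Function.bijective_iff_has_inverse.2 ⟨G.obj, hGF, hFG⟩, fun x y h => ?_⟩
    have : G.obj (f.toFunctor.obj x) ≤ G.obj (f.toFunctor.obj y) :=
      leOfHom (G.map (homOfLE h : (IFun f).toFunctor.obj x ⟶ (IFun f).toFunctor.obj y))
    rwa [hGF, hGF] at this
  · rintro ⟨hbij, hrefl⟩
    let e := Equiv.ofBijective _ hbij
    let G : ICat B ⟶ ICat A := Functor.toCatHom
      { obj y := (show PreOb A from e.symm y)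
        map {y y'} h := homOfLE (by
          obtain ⟨k⟩ := leOfHom h
          exact hrefl _ _
            ⟨eqToHom (e.apply_symm_apply y) ≫ k ≫ eqToHom (e.apply_symm_apply y').symm⟩) }
    refine ⟨G, ?_, ?_⟩ <;> apply Cat.Hom.ext <;>
      refine CategoryTheory.Functor.ext (fun x => ?_) (fun _ _ _ => rfl)
    · exact e.symm_apply_apply x
    · exact e.apply_symm_apply x

theorem StablyVertical.isIso_IFun {A B : Cat.{u, u}} {f : A ⟶ B} (hf : StablyVertical f) :
    IsIso (IFun f) :=
  hf B A (𝟙 B) f (𝟙 A) IsPullback.of_id_snd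

namespace CategoryTheory.Cat

open Limits WalkingParallelPair

abbrev walkingArrow : Cat.{u, u} := Cat.of (AsSmall.{u} (Fin 2))

abbrev walkingParallelPair : Cat.{u, u} := Cat.of (AsSmall.{u} WalkingParallelPair)

def selectArrow (φ : zero ⟶ one) : walkingArrow ⟶ walkingParallelPair :=
  (AsSmall.down ⋙ ComposableArrows.mk₁ φ ⋙ AsSmall.up).toCatHom

variable (φ : zero ⟶ one)

theorem selectArrow_obj_bijective : Function.Bijective (selectArrow φ).toFunctor.obj := by
  constructor
  · rintro ⟨x⟩ ⟨y⟩ h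
    fin_cases x <;> fin_cases y <;> first | rfl | cases h
  · rintro ⟨_ | _⟩
    exacts [⟨⟨0⟩, rfl⟩, ⟨⟨1⟩, rfl⟩]

theorem nonempty_hom_of_selectArrow (x y : walkingArrow)
    (h : Nonempty ((selectArrow φ).toFunctor.obj x ⟶ (selectArrow φ).toFunctor.obj y)) :
    Nonempty (x ⟶ y) := by
  rcases x with ⟨x⟩; rcases y with ⟨y⟩
  fin_cases x <;> fin_cases y
  · exact ⟨𝟙 _⟩
  · exact ⟨⟨homOfLE (by decide)⟩⟩
  · obtain ⟨⟨k⟩⟩ := h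
    exact nomatch (k : one ⟶ zero)
  · exact ⟨𝟙 _⟩

theorem selectArrow_map_of_ne {x y : walkingArrow} (h : x ⟶ y) (hxy : x ≠ y) :
    Arrow.mk ((selectArrow φ).toFunctor.map h) = Arrow.mk (AsSmall.up.map φ) := by
  rcases x with ⟨x⟩; rcases y with ⟨y⟩
  fin_cases x <;> fin_cases y
  · exact absurd rfl hxy
  · rfl
  · exact absurd (leOfHom h.down) (by decide)
  · exact absurd rfl hxy

theorem isIso_IFun_selectArrow : IsIso (IFun (selectArrow φ)) :=
  (isIso_IFun_iff _).2 ⟨selectArrow_obj_bijective φ, nonempty_hom_of_selectArrow φ⟩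

theorem obj_eq_of_comp_selectArrow_eq {P : Cat.{u, u}} {π₁ π₂ : P ⟶ walkingArrow}
    {ψ : zero ⟶ one} (hψ : ψ ≠ φ) (w : π₁ ≫ selectArrow ψ = π₂ ≫ selectArrow φ)
    {p p' : P} (m : p ⟶ p') : π₁.toFunctor.obj p = π₁.toFunctor.obj p' := by
  have hobj (q : P) : π₂.toFunctor.obj q = π₁.toFunctor.obj q :=
    (selectArrow_obj_bijective φ).1 (Functor.congr_obj (congrArg Cat.Hom.toFunctor w) q).symm
  by_contra hne
  have harr : Arrow.mk ((selectArrow ψ).toFunctor.map (π₁.toFunctor.map m)) =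
      Arrow.mk ((selectArrow φ).toFunctor.map (π₂.toFunctor.map m)) :=
    congrArg (fun F : P ⟶ walkingParallelPair => Arrow.mk (F.toFunctor.map m)) w
  rw [selectArrow_map_of_ne ψ _ hne,
    selectArrow_map_of_ne φ _ (by rwa [hobj, hobj])] at harr
  exact hψ (congrArg ULift.down ((Arrow.mk_inj _ _).1 harr))

theorem not_stablyVertical_selectArrow : ¬ StablyVertical (selectArrow φ) := by
  intro hsv
  obtain ⟨ψ, hψ⟩ : ∃ ψ : zero ⟶ one, ψ ≠ φ := by
    match φ with
    | .left => exact ⟨WalkingParallelPairHom.right, nofun⟩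
    | .right => exact ⟨WalkingParallelPairHom.left, nofun⟩
  have hsq := IsPullback.of_hasPullback (selectArrow ψ) (selectArrow φ)
  obtain ⟨⟨-, hsurj⟩, hrefl⟩ := (isIso_IFun_iff _).1 (hsv _ _ _ _ _ hsq)
  obtain ⟨p₀, hp₀⟩ := hsurj ⟨0⟩
  obtain ⟨p₁, hp₁⟩ := hsurj ⟨1⟩
  obtain ⟨m⟩ := hrefl p₀ p₁ (by rw [hp₀, hp₁]; exact ⟨⟨homOfLE (by decide)⟩⟩)
  have h01 := obj_eq_of_comp_selectArrow_eq φ hψ hsq.w m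
  rw [hp₀, hp₁] at h01
  exact absurd (congrArg ULift.down h01) (by decide)

end CategoryTheory.Cat

/-- The stably-vertical functors are strictly contained in the vertical functors for the
reflection `Cat → Preord`; hence the monotone-light factorization system differs from
the reflective one. -/
theorem stablyVertical_strictly_contained_in_vertical :
    (∀ (A B : Cat.{u, u}) (f : A ⟶ B), StablyVertical f → IsIso (IFun f)) ∧
    (∃ (A B : Cat.{u, u}) (f : A ⟶ B), IsIso (IFun f) ∧ ¬ StablyVertical f) :=
  ⟨fun _ _ _ hf => hf.isIso_IFun,
    ⟨_, _, Cat.selectArrow .left, Cat.isIso_IFun_selectArrow _,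
      Cat.not_stablyVertical_selectArrow _⟩⟩
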